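/- Let x ≥ 1 and consider the bicameral game with m_s = 2x + 1, m_r = 2x + 2 (so m_r = m_s + 1) and simple-majority quotas q_s = x + 1, q_r = x + 2. Then: (a) c_s(k) ≠ 0 if and only if 2x + 3 ≤ k ≤ 3x + 3, and c_r(k) ≠ 0 if and only if c_s(k) ≠ 0; (b) c_s(k) < c_r(k) for every k such that c_s(k) ≠ 0. Hence in this game the representative is strictly weakly more desirable than the senator: c_r(k) > c_s(k) for all k such that c_r(k) and c_s(k) are not both zero. -/

import Mathlib

/-!
A senator `s` is critical in `S` exactly when `S` contains `s` together with exactly `q_s`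
senators and at least `q_r` representatives, so the critical coalitions of size `k` are pairs
(senators, representatives) and `c_s(k) = C(m_s-1, q_s-1) * C(m_r, k-q_s)` for `k ≥ q_s + q_r`.
Exchanging the chambers gives `c_r(k) = C(m_r-1, q_r-1) * C(m_s, k-q_r)`. Since
`q_s + m_r = m_s + q_r`, both counts are supported on `2x+3 ≤ k ≤ 3x+3`, and the absorption
identity `(n+1) C(n,i) = (i+1) C(n+1,i+1)` gives `c_r(k) / c_s(k) = (2x+1)(j+1) / (2(x+1)^2)`
with `j = k-x-2 ≥ x+1`, which exceeds `1` as soon as `x ≥ 1`.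
-/

/-- A coalition in the bicameral game with `ms` senators (the left summands) and `mr`
representatives (the right summands) is winning iff it contains at least `qs` senators
and at least `qr` representatives. -/
def bicamWinning (ms mr qs qr : ℕ) (S : Finset (Fin ms ⊕ Fin mr)) : Prop :=
  qs ≤ (S.filter (fun p => p.isLeft)).card ∧ qr ≤ (S.filter (fun p => p.isRight)).card

/-- The number of coalitions of size `k` in which player `i` is critical in the
bicameral game with parameters `(ms, mr, qs, qr)`. -/
noncomputable def bicamCrit (ms mr qs qr : ℕ) (i : Fin ms ⊕ Fin mr) (k : ℕ) : ℕ :=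
  Set.ncard {S : Finset (Fin ms ⊕ Fin mr) |
    S.card = k ∧ i ∈ S ∧ bicamWinning ms mr qs qr S ∧
      ¬ bicamWinning ms mr qs qr (S.erase i)}

open Finset

namespace Finset

variable {α β : Type*}

lemma card_filter_isLeft (S : Finset (α ⊕ β)) : #(S.filter fun p => p.isLeft) = #S.toLeft := by
  rw [show S.filter (fun p => p.isLeft) = S.toLeft.map .inl by ext p; cases p <;> simp, card_map]

lemma card_filter_isRight (S : Finset (α ⊕ β)) :
    #(S.filter fun p => p.isRight) = #S.toRight := by
  rw [show S.filter (fun p => p.isRight) = S.toRight.map .inr by ext p; cases p <;> simp,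
    card_map]

lemma ncard_setOf_toLeft_mem_and_toRight_mem (P : Set (Finset α)) (Q : Set (Finset β)) :
    {S : Finset (α ⊕ β) | S.toLeft ∈ P ∧ S.toRight ∈ Q}.ncard = P.ncard * Q.ncard := by
  rw [← Set.ncard_prod, show {S : Finset (α ⊕ β) | S.toLeft ∈ P ∧ S.toRight ∈ Q} =
    sumEquiv ⁻¹' (P ×ˢ Q) from rfl]
  exact Set.ncard_preimage_of_injective_subset_range sumEquiv.injective
    (by simp [sumEquiv.surjective.range_eq])

variable [Fintype α]

lemma ncard_setOf_card_eq (n : ℕ) :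
    {A : Finset α | #A = n}.ncard = (Fintype.card α).choose n := by
  rw [← card_univ, ← card_powersetCard, ← Set.ncard_coe_finset]
  congr 1
  ext A
  simp

lemma ncard_setOf_card_eq_succ_and_mem [DecidableEq α] (a : α) (n : ℕ) :
    {A : Finset α | #A = n + 1 ∧ a ∈ A}.ncard = (Fintype.card α - 1).choose n := by
  have h : {A : Finset α | #A = n + 1 ∧ a ∈ A} =
      insert a '' ↑(powersetCard n (univ.erase a)) := by
    ext A
    simp only [Set.mem_ofPred_eq, Set.mem_image, mem_coe, mem_powersetCard, subset_erase,
      subset_univ, true_and]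
    constructor
    · rintro ⟨hA, ha⟩
      exact ⟨A.erase a, ⟨notMem_erase a A, by rw [card_erase_of_mem ha, hA]; rfl⟩,
        insert_erase ha⟩
    · rintro ⟨B, ⟨haB, hB⟩, rfl⟩
      exact ⟨by rw [card_insert_of_notMem haB, hB], mem_insert_self a B⟩
  have hinj : Set.InjOn (insert a) (powersetCard n (univ.erase a) : Set (Finset α)) := by
    intro B hB C hC hBC
    simp only [mem_coe, mem_powersetCard, subset_erase] at hB hC
    rw [← erase_insert hB.1.2, ← erase_insert hC.1.2, hBC]
  rw [h, hinj.ncard_image, Set.ncard_coe_finset, card_powersetCard,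
    card_erase_of_mem (mem_univ a), card_univ]

end Finset

section Bicameral

open Sum

variable {ms mr qs qr : ℕ}

lemma bicamWinning_iff {S : Finset (Fin ms ⊕ Fin mr)} :
    bicamWinning ms mr qs qr S ↔ qs ≤ #S.toLeft ∧ qr ≤ #S.toRight := by
  rw [bicamWinning, card_filter_isLeft, card_filter_isRight]

lemma bicamCritical_inl_iff {S : Finset (Fin ms ⊕ Fin mr)} {s : Fin ms} :
    (inl s ∈ S ∧ bicamWinning ms mr qs qr S ∧ ¬ bicamWinning ms mr qs qr (S.erase (inl s))) ↔
      (#S.toLeft = qs ∧ s ∈ S.toLeft) ∧ qr ≤ #S.toRight := by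
  have hL : (S.erase (inl s)).toLeft = S.toLeft.erase s := by ext; simp
  have hR : (S.erase (inl s)).toRight = S.toRight := by ext; simp
  rw [bicamWinning_iff, bicamWinning_iff, hL, hR, ← mem_toLeft]
  constructor
  · rintro ⟨hs, ⟨hq, hr⟩, hnot⟩
    have := card_pos.2 ⟨s, hs⟩
    rw [card_erase_of_mem hs] at hnot
    exact ⟨⟨by omega, hs⟩, hr⟩
  · rintro ⟨⟨hq, hs⟩, hr⟩
    have := card_pos.2 ⟨s, hs⟩
    rw [card_erase_of_mem hs]
    exact ⟨hs, ⟨hq.ge, hr⟩, by omega⟩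

lemma bicamCrit_inr_eq_bicamCrit_inl (r : Fin mr) (k : ℕ) :
    bicamCrit ms mr qs qr (inr r) k = bicamCrit mr ms qr qs (inl r) k := by
  let e := Equiv.finsetCongr (Equiv.sumComm (Fin ms) (Fin mr))
  rw [bicamCrit, bicamCrit, ← Set.ncard_preimage_of_injective_subset_range e.injective
    (by simp [e.surjective.range_eq])]
  congr 1
  ext S
  have herase : (e S).erase (inl r) = e (S.erase (inr r)) := (map_erase _ S (inr r)).symm
  simp only [Set.mem_preimage, Set.mem_ofPred_eq]
  rw [herase]
  simp [e, bicamWinning_iff, and_comm, -map_erase]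

lemma bicamCrit_inl (hqs : 0 < qs) (s : Fin ms) (k : ℕ) :
    bicamCrit ms mr qs qr (inl s) k =
      (ms - 1).choose (qs - 1) * if qs + qr ≤ k then mr.choose (k - qs) else 0 := by
  obtain ⟨q, rfl⟩ : ∃ q, qs = q + 1 := ⟨qs - 1, by omega⟩
  have hcrit : {S : Finset (Fin ms ⊕ Fin mr) | #S = k ∧ inl s ∈ S ∧
      bicamWinning ms mr (q + 1) qr S ∧ ¬ bicamWinning ms mr (q + 1) qr (S.erase (inl s))} =
      {S | S.toLeft ∈ {A | #A = q + 1 ∧ s ∈ A} ∧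
        S.toRight ∈ {B | qr ≤ #B ∧ #B + (q + 1) = k}} := by
    ext S
    simp only [bicamCritical_inl_iff, Set.mem_ofPred_eq, ← card_toLeft_add_card_toRight]
    grind
  rw [bicamCrit, hcrit, ncard_setOf_toLeft_mem_and_toRight_mem,
    ncard_setOf_card_eq_succ_and_mem, Fintype.card_fin, Nat.add_sub_cancel]
  congr 1
  split_ifs with hk
  · rw [show {B : Finset (Fin mr) | qr ≤ #B ∧ #B + (q + 1) = k} = {B | #B = k - (q + 1)} from
      Set.ext fun B => by simp only [Set.mem_ofPred_eq]; omega,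
      ncard_setOf_card_eq, Fintype.card_fin]
  · rw [Set.ncard_eq_zero, Set.eq_empty_iff_forall_notMem]
    simp only [Set.mem_ofPred_eq]
    omega

lemma bicamCrit_inr (hqr : 0 < qr) (r : Fin mr) (k : ℕ) :
    bicamCrit ms mr qs qr (inr r) k =
      (mr - 1).choose (qr - 1) * if qr + qs ≤ k then ms.choose (k - qr) else 0 := by
  rw [bicamCrit_inr_eq_bicamCrit_inl, bicamCrit_inl hqr]

lemma bicamCrit_inl_ne_zero_iff (hqs : 0 < qs) (hqs' : qs ≤ ms) (s : Fin ms) (k : ℕ) :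
    bicamCrit ms mr qs qr (inl s) k ≠ 0 ↔ qs + qr ≤ k ∧ k ≤ qs + mr := by
  rw [bicamCrit_inl hqs]
  split_ifs with hk
  · simp only [ne_eq, mul_eq_zero, Nat.choose_eq_zero_iff, not_or, not_lt]
    omega
  · simp only [mul_zero, ne_eq, not_true_eq_false, false_iff]
    omega

lemma bicamCrit_inr_ne_zero_iff (hqr : 0 < qr) (hqr' : qr ≤ mr) (r : Fin mr) (k : ℕ) :
    bicamCrit ms mr qs qr (inr r) k ≠ 0 ↔ qr + qs ≤ k ∧ k ≤ qr + ms := by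
  rw [bicamCrit_inr_eq_bicamCrit_inl, bicamCrit_inl_ne_zero_iff hqr hqr']

lemma choose_mul_choose_lt {x k : ℕ} (hx : 1 ≤ x) (hk : 2 * x + 3 ≤ k) (hk' : k ≤ 3 * x + 3) :
    (2 * x).choose x * (2 * x + 2).choose (k - (x + 1)) <
      (2 * x + 1).choose (x + 1) * (2 * x + 1).choose (k - (x + 2)) := by
  obtain ⟨j, rfl⟩ : ∃ j, k = j + x + 2 := ⟨k - (x + 2), by omega⟩
  rw [show j + x + 2 - (x + 1) = j + 1 by omega, show j + x + 2 - (x + 2) = j by omega]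
  have hc : (2 * x + 1) * (2 * x).choose x = (2 * x + 1).choose (x + 1) * (x + 1) :=
    Nat.add_one_mul_choose_eq (2 * x) x
  have hd : (2 * x + 2) * (2 * x + 1).choose j = (2 * x + 2).choose (j + 1) * (j + 1) :=
    Nat.add_one_mul_choose_eq (2 * x + 1) j
  have hpos : 0 < (2 * x).choose x * (2 * x + 2).choose (j + 1) :=
    Nat.mul_pos (Nat.choose_pos (by omega)) (Nat.choose_pos (by omega))
  have hfactor : (x + 1) * (2 * x + 2) < (2 * x + 1) * (j + 1) := by nlinarith
  refine Nat.lt_of_mul_lt_mul_left (a := (x + 1) * (2 * x + 2)) ?_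
  calc (x + 1) * (2 * x + 2) * ((2 * x).choose x * (2 * x + 2).choose (j + 1))
      < (2 * x + 1) * (j + 1) * ((2 * x).choose x * (2 * x + 2).choose (j + 1)) :=
        Nat.mul_lt_mul_of_pos_right hfactor hpos
    _ = (2 * x + 1) * (2 * x).choose x * ((2 * x + 2).choose (j + 1) * (j + 1)) := by ring
    _ = (2 * x + 1).choose (x + 1) * (x + 1) * ((2 * x + 2) * (2 * x + 1).choose j) := by
        rw [hc, hd]
    _ = (x + 1) * (2 * x + 2) * ((2 * x + 1).choose (x + 1) * (2 * x + 1).choose j) := by ring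

end Bicameral

/-- The extreme exceptional case `mr = ms + 1`: with `ms = 2x + 1`, `mr = 2x + 2`,
`qs = x + 1`, `qr = x + 2`: (a) the senator's critical numbers are nonzero exactly
for `2x + 3 ≤ k ≤ 3x + 3`, and the representative's support coincides with the
senator's; (b) the representative's critical number strictly exceeds the senator's
there; hence the representative strictly dominates the senator. -/
theorem bicam_adjacent_size_case (x : ℕ) (hx : 1 ≤ x)
    (s : Fin (2 * x + 1)) (r : Fin (2 * x + 2)) :
    (∀ k : ℕ, bicamCrit (2 * x + 1) (2 * x + 2) (x + 1) (x + 2) (Sum.inl s) k ≠ 0 ↔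
      2 * x + 3 ≤ k ∧ k ≤ 3 * x + 3) ∧
    (∀ k : ℕ, bicamCrit (2 * x + 1) (2 * x + 2) (x + 1) (x + 2) (Sum.inr r) k ≠ 0 ↔
      bicamCrit (2 * x + 1) (2 * x + 2) (x + 1) (x + 2) (Sum.inl s) k ≠ 0) ∧
    (∀ k : ℕ, bicamCrit (2 * x + 1) (2 * x + 2) (x + 1) (x + 2) (Sum.inl s) k ≠ 0 →
      bicamCrit (2 * x + 1) (2 * x + 2) (x + 1) (x + 2) (Sum.inl s) k <
      bicamCrit (2 * x + 1) (2 * x + 2) (x + 1) (x + 2) (Sum.inr r) k) ∧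
    (∀ k : ℕ, ¬(bicamCrit (2 * x + 1) (2 * x + 2) (x + 1) (x + 2) (Sum.inr r) k = 0 ∧
               bicamCrit (2 * x + 1) (2 * x + 2) (x + 1) (x + 2) (Sum.inl s) k = 0) →
      bicamCrit (2 * x + 1) (2 * x + 2) (x + 1) (x + 2) (Sum.inr r) k >
      bicamCrit (2 * x + 1) (2 * x + 2) (x + 1) (x + 2) (Sum.inl s) k) := by
  have hs (k : ℕ) : bicamCrit (2 * x + 1) (2 * x + 2) (x + 1) (x + 2) (Sum.inl s) k ≠ 0 ↔
      2 * x + 3 ≤ k ∧ k ≤ 3 * x + 3 := by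
    rw [bicamCrit_inl_ne_zero_iff (by omega) (by omega)]
    omega
  have hr (k : ℕ) : bicamCrit (2 * x + 1) (2 * x + 2) (x + 1) (x + 2) (Sum.inr r) k ≠ 0 ↔
      2 * x + 3 ≤ k ∧ k ≤ 3 * x + 3 := by
    rw [bicamCrit_inr_ne_zero_iff (by omega) (by omega)]
    omega
  have hlt (k : ℕ) (hk : bicamCrit (2 * x + 1) (2 * x + 2) (x + 1) (x + 2) (Sum.inl s) k ≠ 0) :
      bicamCrit (2 * x + 1) (2 * x + 2) (x + 1) (x + 2) (Sum.inl s) k <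
        bicamCrit (2 * x + 1) (2 * x + 2) (x + 1) (x + 2) (Sum.inr r) k := by
    obtain ⟨hk₁, hk₂⟩ := (hs k).1 hk
    rw [bicamCrit_inl (by omega), bicamCrit_inr (by omega), if_pos (by omega), if_pos (by omega)]
    simpa using choose_mul_choose_lt hx hk₁ hk₂
  exact ⟨hs, fun k => (hr k).trans (hs k).symm, hlt,
    fun k hk => hlt k fun h0 => hk ⟨not_not.1 fun h => (hs k).2 ((hr k).1 h) h0, h0⟩⟩
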